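/- arXiv:2601.09196 — 2 statements merged into one kernel-verified Lean document; each statement's English description precedes it below -/
import Mathlib

section
/- Let D be an invariant divergence on 𝒫(𝒵) with constant η > 0, let P_1 ≠ P_2 ∈ 𝒫(𝒵) with P* the normalized geometric mean of P_1 and P_2, and let {r_n} be a sequence of positive thresholds with r_n = Θ(1/n). Then there exist a constant M_3 > 0 and N_3 ∈ ℕ such that for all n ≥ N_3, every pair (T,R) ∈ A_{Σ_{𝐏*}}(r_n/(2η) − M_3/n^{3/2}) satisfies D(T‖R) < r_n; that is, A_{Σ_{𝐏*}}(r_n/(2η) − M_3/n^{3/2}) ⊆ {(T,R) ∈ 𝒫²(𝒵) : D(T‖R) < r_n}. -/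
open scoped BigOperators
open Filter MeasureTheory Matrix

namespace TwoSampleTest

variable {m : ℕ}

/-- All probability distributions on the alphabet `Fin (m+1)` (the set `𝒫̄(𝒵)`). -/
def IsDist (P : Fin (m+1) → ℝ) : Prop :=
  (∀ i, 0 ≤ P i) ∧ ∑ i, P i = 1

/-- Strictly positive probability distributions on `Fin (m+1)` (the set `𝒫(𝒵)`). -/
def IsPosDist (P : Fin (m+1) → ℝ) : Prop :=
  (∀ i, 0 < P i) ∧ ∑ i, P i = 1

/-- The open coordinate domain `Ξ ⊆ ℝ^m`. -/
def Xi (m : ℕ) : Set (Fin m → ℝ) :=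
  {x | (∀ i, 0 < x i) ∧ ∑ i, x i < 1}

/-- Coordinate vector (first `m` components) of a distribution on `Fin (m+1)`. -/
def coordOf (P : Fin (m+1) → ℝ) : Fin m → ℝ := fun i => P i.castSucc

/-- Euclidean norm on `ℝ^m`. -/
noncomputable def l2norm (v : Fin m → ℝ) : ℝ := Real.sqrt (∑ i, (v i)^2)

/-- ℓ₁ distance between two distributions. -/
noncomputable def l1dist (P Q : Fin (m+1) → ℝ) : ℝ := ∑ i, |P i - Q i|

/-- A divergence on `𝒫(𝒵)`, viewed through coordinates in `Ξ`. -/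
structure Divergence (m : ℕ) where
  f : (Fin m → ℝ) → (Fin m → ℝ) → ℝ
  smooth : ContDiffOn ℝ (⊤ : ℕ∞)
    (fun p : (Fin m → ℝ) × (Fin m → ℝ) => f p.1 p.2) ((Xi m) ×ˢ (Xi m))
  nonneg : ∀ s ∈ Xi m, ∀ r ∈ Xi m, 0 ≤ f s r
  eq_zero_iff : ∀ s ∈ Xi m, ∀ r ∈ Xi m, (f s r = 0 ↔ s = r)
  taylor : ∀ r ∈ Xi m, ∃ G : Matrix (Fin m) (Fin m) ℝ, G.PosDef ∧
      ∃ C > (0:ℝ), ∃ δ > (0:ℝ), ∀ e : Fin m → ℝ, l2norm e < δ → r + e ∈ Xi m →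
        |f (r + e) r - (1/2) * ∑ i, ∑ j, G i j * e i * e j| ≤ C * (l2norm e)^3
  boundary : ∀ r ∈ Xi m, ∀ S : ℕ → (Fin m → ℝ), (∀ n, S n ∈ Xi m) →
      ∀ L ∈ frontier (Xi m), Filter.Tendsto S Filter.atTop (nhds L) →
        0 < Filter.liminf (fun n => f (S n) r) Filter.atTop

/-- The divergence evaluated at two distributions. -/
noncomputable def Dapp (D : Divergence m) (T R : Fin (m+1) → ℝ) : ℝ :=
  D.f (coordOf T) (coordOf R)

/-- The matrix `A_{D,P}` associated with a divergence `D` at coordinate point `p`: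
`a_{ij} = ½ ∂²D(S‖p)/∂S_i∂S_j` at `S = p`. -/
noncomputable def Amat (D : Divergence m) (p : Fin m → ℝ) : Matrix (Fin m) (Fin m) ℝ :=
  Matrix.of fun i j =>
    (1/2) * fderiv ℝ (fun s => fderiv ℝ (fun s' => D.f s' p) s (Pi.single j 1)) p (Pi.single i 1)

/-- The matrix `Σ_P`. -/
noncomputable def SigmaMat (P : Fin (m+1) → ℝ) : Matrix (Fin m) (Fin m) ℝ :=
  Matrix.of fun i j =>
    if i = j then 1 / P i.castSucc + 1 / P (Fin.last m) else 1 / P (Fin.last m)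

/-- `D` is an invariant divergence with constant `η`. -/
def IsInvariant (D : Divergence m) (η : ℝ) : Prop :=
  ∀ P : Fin (m+1) → ℝ, IsPosDist P → Amat D (coordOf P) = η • SigmaMat P

/-- Quadratic form `vᵀ M v`. -/
noncomputable def quadForm (M : Matrix (Fin m) (Fin m) ℝ) (v : Fin m → ℝ) : ℝ :=
  v ⬝ᵥ M.mulVec v

/-- Type (empirical distribution) of a sequence. -/
noncomputable def typeOf {n : ℕ} (x : Fin n → Fin (m+1)) : Fin (m+1) → ℝ :=
  fun i => ((Finset.univ.filter (fun t => x t = i)).card : ℝ) / n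

/-- Probability of a sequence under i.i.d. sampling from `P`. -/
def probSeq (P : Fin (m+1) → ℝ) {n : ℕ} (x : Fin n → Fin (m+1)) : ℝ := ∏ t, P (x t)

/-- Type-I error of the divergence test with test statistic `Dfun` and threshold `r`,
under common distribution `P`: the probability that `Dfun(T_{X^n}‖T_{Y^n}) ≥ r`. -/
noncomputable def alpha (Dfun : (Fin (m+1) → ℝ) → (Fin (m+1) → ℝ) → ℝ) (r : ℝ)
    (P : Fin (m+1) → ℝ) (n : ℕ) : ℝ :=
  ∑ x : Fin n → Fin (m+1), ∑ y : Fin n → Fin (m+1),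
    if r ≤ Dfun (typeOf x) (typeOf y) then probSeq P x * probSeq P y else 0

/-- Type-II error: the probability under `P₁ × P₂` that `Dfun(T_{X^n}‖T_{Y^n}) < r`. -/
noncomputable def beta (Dfun : (Fin (m+1) → ℝ) → (Fin (m+1) → ℝ) → ℝ) (r : ℝ)
    (P₁ P₂ : Fin (m+1) → ℝ) (n : ℕ) : ℝ :=
  ∑ x : Fin n → Fin (m+1), ∑ y : Fin n → Fin (m+1),
    if Dfun (typeOf x) (typeOf y) < r then probSeq P₁ x * probSeq P₂ y else 0

/-- Kullback-Leibler divergence (with the convention `0 · ln 0 = 0`). -/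
noncomputable def KL (P Q : Fin (m+1) → ℝ) : ℝ := ∑ i, P i * Real.log (P i / Q i)

/-- KL divergence variance. -/
noncomputable def VKL (P Q : Fin (m+1) → ℝ) : ℝ :=
  ∑ i, P i * (Real.log (P i / Q i) - KL P Q)^2

/-- Bhattacharyya distance. -/
noncomputable def DB (P Q : Fin (m+1) → ℝ) : ℝ :=
  - Real.log (∑ i, Real.sqrt (P i * Q i))

/-- The normalized geometric mean `P*` of two distributions. -/
noncomputable def Pstar (P₁ P₂ : Fin (m+1) → ℝ) : Fin (m+1) → ℝ :=
  fun i => Real.sqrt (P₁ i * P₂ i) / ∑ j, Real.sqrt (P₁ j * P₂ j)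

/-- Jensen–Shannon divergence. -/
noncomputable def DJS (T R : Fin (m+1) → ℝ) : ℝ :=
  (1/2) * KL T (fun i => (T i + R i)/2) + (1/2) * KL R (fun i => (T i + R i)/2)

/-- Law of `m` i.i.d. standard Gaussians. -/
noncomputable def stdGaussianPi (m : ℕ) : Measure (Fin m → ℝ) :=
  Measure.pi (fun _ => ProbabilityTheory.gaussianReal 0 1)

/-- Tail probability of the generalized chi-square distribution with weights `lam`:
`P(∑ lam i * U i ^ 2 ≥ c)` for i.i.d. standard normal `U`. -/
noncomputable def genChiSqTail (m : ℕ) (lam : Fin m → ℝ) (c : ℝ) : ℝ :=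
  (stdGaussianPi m {u | c ≤ ∑ i, lam i * (u i)^2}).toReal

/-- Tail probability of the chi-square distribution with `m` degrees of freedom. -/
noncomputable def chiSqTail (m : ℕ) (c : ℝ) : ℝ := genChiSqTail m (fun _ => 1) c

/-- Inverse of the chi-square tail probability. -/
noncomputable def chiSqTailInv (m : ℕ) (ε : ℝ) : ℝ :=
  sInf {c : ℝ | 0 < c ∧ chiSqTail m c ≤ ε}

/-- The linear functional `ℓ_P(T,R)`. -/
noncomputable def ellP (P P₁ P₂ T R : Fin (m+1) → ℝ) : ℝ :=
  ∑ i, (T i - P i) * Real.log (P i / P₁ i) + ∑ i, (R i - P i) * Real.log (P i / P₂ i)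

/-- Membership of `(T,R)` in the set `A_{Σ_P}(r)`. -/
noncomputable def memASigma (P T R : Fin (m+1) → ℝ) (r : ℝ) : Prop :=
  IsPosDist T ∧ IsPosDist R ∧
    quadForm (SigmaMat P) (fun i => coordOf T i - coordOf P i)
      + quadForm (SigmaMat P) (fun i => coordOf R i - coordOf P i) ≤ r

/-- The vector with components `ln(P_i/Q_i) − ln(P_k/Q_k)`, `i = 1,…,k−1`. -/
noncomputable def cvec (P Q : Fin (m+1) → ℝ) : Fin m → ℝ :=
  fun i => Real.log (P i.castSucc / Q i.castSucc) - Real.log (P (Fin.last m) / Q (Fin.last m))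

/-- A type distribution with denominator `n`. -/
def IsTypeDist (n : ℕ) (P : Fin (m+1) → ℝ) : Prop :=
  IsDist P ∧ ∀ i, ∃ a : ℕ, P i = (a : ℝ) / n

/-- The best (largest) type-II error exponent `−(1/n) ln β_n` over all thresholds `r > 0`
whose type-I error is at most `ε` for every common distribution `P ∈ 𝒫(𝒵)`. -/
noncomputable def supExp (Dfun : (Fin (m+1) → ℝ) → (Fin (m+1) → ℝ) → ℝ)
    (P₁ P₂ : Fin (m+1) → ℝ) (ε : ℝ) (n : ℕ) : ℝ :=
  sSup { v : ℝ | ∃ r : ℝ, 0 < r ∧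
    (∀ P : Fin (m+1) → ℝ, IsPosDist P → alpha Dfun r P n ≤ ε) ∧
    v = -(Real.log (beta Dfun r P₁ P₂ n)) / n }

end TwoSampleTest

/-!
The map `F (t, r) = D.f t r` is smooth, nonnegative and vanishes on the diagonal. Hence at a
diagonal point `(p, p)` its derivative vanishes, and so does its Hessian `H` on every diagonal
direction `(w, w)`: differentiate `x ↦ fderiv F (x, x) = 0` and use the symmetry of `H`. Since
`(t - p, r - p) = (t - r, 0) + (r - p, r - p)`, second-order Taylor expansion at `(p, p)` gives
`D(t‖r) = ½ H (t - r, 0) (t - r, 0) + O(‖(t - p, r - p)‖³)`, and invariance turns the quadratic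
term into `η (t - r)ᵀ Σ_p (t - r)`. On `A_{Σ_p}(ρ)` this is at most `2ηρ`, while
`‖(t - p, r - p)‖ ≤ √ρ` because `Σ_p` dominates the identity. So `D(T‖R) ≤ 2ηρ + C ρ^{3/2}`,
and for `ρ = r_n/(2η) - M₃ n^{-3/2}` with `r_n ≤ c₂/n` the cubic error is beaten by the
`2ηM₃ n^{-3/2}` margin once `M₃` is large.
-/

open Asymptotics Topology

section Taylor

variable {E F : Type*} [NormedAddCommGroup E] [NormedSpace ℝ E]
  [NormedAddCommGroup F] [NormedSpace ℝ F] [CompleteSpace F]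

theorem norm_taylor_two_remainder_le {f : E → F} {x y : E} {C : ℝ}
    (hf : ∀ t ∈ Set.Icc (0 : ℝ) 1, ContDiffAt ℝ 3 f (x + t • y))
    (hC : ∀ t ∈ Set.Icc (0 : ℝ) 1, ‖iteratedFDeriv ℝ 3 f (x + t • y)‖ ≤ C) :
    ‖f (x + y) - f x - fderiv ℝ f x y - (2 : ℝ)⁻¹ • fderiv ℝ (fderiv ℝ f) x y y‖
      ≤ (2 : ℝ)⁻¹ * C * ‖y‖ ^ 3 := by
  have hrem : f (x + y) - f x - fderiv ℝ f x y - (2 : ℝ)⁻¹ • fderiv ℝ (fderiv ℝ f) x y y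
      = (2 : ℝ)⁻¹ •
          ∫ t in (0 : ℝ)..1, (1 - t) ^ 2 • iteratedFDeriv ℝ 3 f (x + t • y) (fun _ => y) := by
    rw [map_add_eq_sum_add_integral_iteratedFDeriv (n := 2) hf]
    simp only [Finset.sum_range_succ, Finset.sum_range_zero, iteratedFDeriv_zero_apply,
      iteratedFDeriv_one_apply, iteratedFDeriv_two_apply]
    norm_num [Nat.factorial]
    abel
  have hintegrand : ∀ t ∈ Set.uIoc (0 : ℝ) 1,
      ‖(1 - t) ^ 2 • iteratedFDeriv ℝ 3 f (x + t • y) (fun _ => y)‖ ≤ C * ‖y‖ ^ 3 := by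
    intro t ht
    rw [Set.uIoc_of_le zero_le_one] at ht
    have h1t : ‖(1 - t) ^ 2‖ ≤ 1 := by
      rw [Real.norm_of_nonneg (sq_nonneg _)]
      nlinarith [ht.1, ht.2]
    calc ‖(1 - t) ^ 2 • iteratedFDeriv ℝ 3 f (x + t • y) (fun _ => y)‖
        ≤ 1 * (‖iteratedFDeriv ℝ 3 f (x + t • y)‖ * ∏ _ : Fin 3, ‖y‖) := by
          rw [norm_smul]
          gcongr
          exact (iteratedFDeriv ℝ 3 f (x + t • y)).le_opNorm _
      _ ≤ C * ‖y‖ ^ 3 := by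
          rw [one_mul, Fin.prod_const]
          gcongr
          exact hC t ⟨ht.1.le, ht.2⟩
  rw [hrem, norm_smul, Real.norm_of_nonneg (by norm_num), mul_assoc]
  gcongr
  simpa using intervalIntegral.norm_integral_le_of_norm_le_const hintegrand

theorem ContDiffAt.isBigO_taylor_two {f : E → F} {x : E} (hf : ContDiffAt ℝ 3 f x) :
    (fun y => f (x + y) - f x - fderiv ℝ f x y - (2 : ℝ)⁻¹ • fderiv ℝ (fderiv ℝ f) x y y)
      =O[𝓝 0] fun y => ‖y‖ ^ 3 := by
  set C := ‖iteratedFDeriv ℝ 3 f x‖ + 1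
  have hnear : ∀ᶠ z in 𝓝 x, ContDiffAt ℝ 3 f z ∧ ‖iteratedFDeriv ℝ 3 f z‖ ≤ C :=
    (hf.eventually (by simp)).and <| ((hf.continuousAt_iteratedFDeriv le_rfl).norm.eventually
      (gt_mem_nhds (lt_add_one _))).mono fun _ h => h.le
  obtain ⟨δ, hδ, hball⟩ := Metric.eventually_nhds_iff_ball.mp hnear
  refine IsBigO.of_bound ((2 : ℝ)⁻¹ * C) (Metric.eventually_nhds_iff_ball.mpr ⟨δ, hδ, ?_⟩)
  intro y hy
  have hseg : ∀ t ∈ Set.Icc (0 : ℝ) 1, x + t • y ∈ Metric.ball x δ := fun t ht => by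
    rw [Metric.mem_ball, dist_self_add_left, norm_smul, Real.norm_of_nonneg ht.1]
    exact (mul_le_of_le_one_left (norm_nonneg y) ht.2).trans_lt (mem_ball_zero_iff.mp hy)
  rw [norm_pow, norm_norm]
  exact norm_taylor_two_remainder_le (fun t ht => (hball _ (hseg t ht)).1)
    (fun t ht => (hball _ (hseg t ht)).2)

end Taylor

section DiagonalMinimum

variable {E : Type*} [NormedAddCommGroup E] [NormedSpace ℝ E]
  {F : E × E → ℝ} {s : Set E} {p : E}

theorem fderiv_diag_eq_zero (hs : IsOpen s) (hnonneg : ∀ x ∈ s, ∀ y ∈ s, 0 ≤ F (x, y))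
    (hdiag : ∀ x ∈ s, F (x, x) = 0) (hp : p ∈ s) : fderiv ℝ F (p, p) = 0 := by
  refine IsLocalMin.fderiv_eq_zero ?_
  filter_upwards [(hs.prod hs).mem_nhds (Set.mk_mem_prod hp hp)] with z hz
  rw [hdiag p hp]
  exact hnonneg z.1 hz.1 z.2 hz.2

theorem fderiv_fderiv_diag_eq_zero (hs : IsOpen s) (hF : ContDiffOn ℝ 2 F (s ×ˢ s))
    (hnonneg : ∀ x ∈ s, ∀ y ∈ s, 0 ≤ F (x, y)) (hdiag : ∀ x ∈ s, F (x, x) = 0) (hp : p ∈ s)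
    (w : E) : fderiv ℝ (fderiv ℝ F) (p, p) (w, w) = 0 := by
  have hdiff : DifferentiableAt ℝ (fderiv ℝ F) (p, p) :=
    ((hF.contDiffAt ((hs.prod hs).mem_nhds (Set.mk_mem_prod hp hp))).fderiv_right
      (m := 1) le_rfl).differentiableAt one_ne_zero
  have hchain : HasFDerivAt (fun x => fderiv ℝ F (x, x))
      ((fderiv ℝ (fderiv ℝ F) (p, p)).comp
        ((ContinuousLinearMap.id ℝ E).prod (ContinuousLinearMap.id ℝ E))) p :=
    hdiff.hasFDerivAt.comp p (f := fun x : E => (x, x))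
      ((hasFDerivAt_id p).prodMk (hasFDerivAt_id p))
  have hzero : (fun x => fderiv ℝ F (x, x)) =ᶠ[𝓝 p] fun _ => 0 := by
    filter_upwards [hs.mem_nhds hp] with x hx
    exact fderiv_diag_eq_zero hs hnonneg hdiag hx
  have h := hchain.fderiv.symm.trans (hzero.fderiv_eq.trans (fderiv_const_apply 0))
  simpa using congrArg (fun L => L w) h

theorem fderiv_fderiv_apply_self_eq_of_diag (hs : IsOpen s) (hF : ContDiffOn ℝ 2 F (s ×ˢ s))
    (hnonneg : ∀ x ∈ s, ∀ y ∈ s, 0 ≤ F (x, y)) (hdiag : ∀ x ∈ s, F (x, x) = 0) (hp : p ∈ s)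
    (v : E × E) :
    fderiv ℝ (fderiv ℝ F) (p, p) v v
      = fderiv ℝ (fderiv ℝ F) (p, p) (v.1 - v.2, 0) (v.1 - v.2, 0) := by
  have hsymm := (hF.contDiffAt ((hs.prod hs).mem_nhds (Set.mk_mem_prod hp hp))).isSymmSndFDerivAt
    (by simp)
  have hv : v = (v.1 - v.2, 0) + (v.2, v.2) := by ext <;> simp
  conv_lhs => rw [hv]
  simp only [map_add, _root_.add_apply]
  rw [hsymm (v.1 - v.2, 0) (v.2, v.2)]
  simp [fderiv_fderiv_diag_eq_zero hs hF hnonneg hdiag hp]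

end DiagonalMinimum

section PartialDerivative

variable {E E' G : Type*} [NormedAddCommGroup E] [NormedSpace ℝ E]
  [NormedAddCommGroup E'] [NormedSpace ℝ E'] [NormedAddCommGroup G] [NormedSpace ℝ G]

theorem fderiv_fderiv_comp_prodMk_left {F : E × E' → G} {p : E} {q : E'}
    (hF : ContDiffAt ℝ 2 F (p, q)) (u v : E) :
    fderiv ℝ (fun s => fderiv ℝ (fun s' => F (s', q)) s v) p u
      = fderiv ℝ (fderiv ℝ F) (p, q) (u, 0) (v, 0) := by
  have hpartial : (fun s => fderiv ℝ (fun s' => F (s', q)) s v)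
      =ᶠ[𝓝 p] fun s => fderiv ℝ F (s, q) (v, 0) := by
    have hcont : Tendsto (fun s : E => (s, q)) (𝓝 p) (𝓝 (p, q)) :=
      (continuous_id.prodMk continuous_const).tendsto p
    filter_upwards [hcont.eventually (hF.eventually (by simp))] with s hs
    have hchain : HasFDerivAt (fun s' => F (s', q))
        ((fderiv ℝ F (s, q)).comp (ContinuousLinearMap.inl ℝ E E')) s :=
      (hs.differentiableAt two_ne_zero).hasFDerivAt.comp s (hasFDerivAt_prodMk_left s q)
    simp [hchain.fderiv]
  have hdiff : DifferentiableAt ℝ (fderiv ℝ F) (p, q) :=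
    (hF.fderiv_right (m := 1) le_rfl).differentiableAt one_ne_zero
  have hchain : HasFDerivAt (fun s => fderiv ℝ F (s, q))
      ((fderiv ℝ (fderiv ℝ F) (p, q)).comp (ContinuousLinearMap.inl ℝ E E')) p :=
    hdiff.hasFDerivAt.comp p (hasFDerivAt_prodMk_left p q)
  simp [hpartial.fderiv_eq, (hchain.clm_apply (hasFDerivAt_const (v, (0 : E')) p)).fderiv]

end PartialDerivative

namespace TwoSampleTest

variable {m : ℕ}

lemma isOpen_xi : IsOpen (Xi m) := by
  simp only [Xi, Set.ofPred_and, Set.ofPred_forall]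
  exact (isOpen_iInter_of_finite fun i => isOpen_lt continuous_const (continuous_apply i)).inter
    (isOpen_lt (continuous_finsetSum _ fun i _ => continuous_apply i) continuous_const)

lemma coordOf_mem_xi {R : Fin (m+1) → ℝ} (hR : IsPosDist R) : coordOf R ∈ Xi m := by
  refine ⟨fun i => hR.1 _, ?_⟩
  have hsum := Fin.sum_univ_castSucc R
  simp only [coordOf]
  linarith [hR.1 (Fin.last m), hR.2]

lemma isPosDist_pstar {P₁ P₂ : Fin (m+1) → ℝ} (h₁ : IsPosDist P₁) (h₂ : IsPosDist P₂) :
    IsPosDist (Pstar P₁ P₂) := by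
  have hpos : ∀ i, 0 < √(P₁ i * P₂ i) := fun i => Real.sqrt_pos.mpr (mul_pos (h₁.1 i) (h₂.1 i))
  have hsum : 0 < ∑ j, √(P₁ j * P₂ j) :=
    Finset.sum_pos (fun j _ => hpos j) Finset.univ_nonempty
  refine ⟨fun i => div_pos (hpos i) hsum, ?_⟩
  simp only [Pstar]
  rw [← Finset.sum_div, div_self hsum.ne']

lemma quadForm_smul (c : ℝ) (M : Matrix (Fin m) (Fin m) ℝ) (v : Fin m → ℝ) :
    quadForm (c • M) v = c * quadForm M v := by
  simp [quadForm, Matrix.smul_mulVec, dotProduct_smul]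

lemma quadForm_sub_le {M : Matrix (Fin m) (Fin m) ℝ} (hM : ∀ v, 0 ≤ quadForm M v)
    (a b : Fin m → ℝ) : quadForm M (a - b) ≤ 2 * quadForm M a + 2 * quadForm M b := by
  have hpar : quadForm M (a - b) + quadForm M (a + b) = 2 * quadForm M a + 2 * quadForm M b := by
    simp only [quadForm, Matrix.mulVec_sub, Matrix.mulVec_add, dotProduct_sub, dotProduct_add,
      sub_dotProduct, add_dotProduct]
    ring
  linarith [hM (a + b)]

lemma quadForm_eq_of_apply_single (B : (Fin m → ℝ) →L[ℝ] (Fin m → ℝ) →L[ℝ] ℝ)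
    {M : Matrix (Fin m) (Fin m) ℝ} (hM : ∀ i j, M i j = B (Pi.single i 1) (Pi.single j 1))
    (v : Fin m → ℝ) : quadForm M v = B v v := by
  have : M = LinearMap.toMatrix₂' ℝ ((ContinuousLinearMap.coeLM ℝ) ∘ₗ B.toLinearMap) := by
    ext i j; simp [hM]
  rw [quadForm, ← Matrix.toLinearMap₂'_apply', this, Matrix.toLinearMap₂'_toMatrix']
  rfl

lemma quadForm_sigmaMat (P : Fin (m+1) → ℝ) (v : Fin m → ℝ) :
    quadForm (SigmaMat P) v
      = ∑ i, v i ^ 2 / P i.castSucc + (∑ i, v i) ^ 2 / P (Fin.last m) := by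
  have hrow : ∀ i, (SigmaMat P *ᵥ v) i = v i / P i.castSucc + (∑ j, v j) / P (Fin.last m) := by
    intro i
    have hentry : ∀ j, SigmaMat P i j * v j
        = (if i = j then v j / P i.castSucc else 0) + v j / P (Fin.last m) := by
      intro j
      simp only [SigmaMat, Matrix.of_apply]
      split_ifs <;> ring
    simp only [Matrix.mulVec, dotProduct, hentry, Finset.sum_add_distrib, Finset.sum_ite_eq,
      Finset.mem_univ, if_true, Finset.sum_div]
  simp only [quadForm, dotProduct, hrow, mul_add, Finset.sum_add_distrib, ← Finset.sum_mul]
  congr 1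
  · exact Finset.sum_congr rfl fun i _ => by ring
  · ring

lemma quadForm_sigmaMat_nonneg {P : Fin (m+1) → ℝ} (hP : ∀ i, 0 < P i) (v : Fin m → ℝ) :
    0 ≤ quadForm (SigmaMat P) v := by
  rw [quadForm_sigmaMat]
  exact add_nonneg (Finset.sum_nonneg fun i _ => div_nonneg (sq_nonneg _) (hP _).le)
    (div_nonneg (sq_nonneg _) (hP _).le)

lemma norm_le_sqrt_quadForm_sigmaMat {P : Fin (m+1) → ℝ} (hP : IsPosDist P) (v : Fin m → ℝ) :
    ‖v‖ ≤ √(quadForm (SigmaMat P) v) := by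
  refine (pi_norm_le_iff_of_nonneg (Real.sqrt_nonneg _)).mpr fun i => ?_
  rw [Real.norm_eq_abs]
  apply Real.abs_le_sqrt
  have hPi : P i.castSucc ≤ 1 :=
    hP.2 ▸ Finset.single_le_sum (fun j _ => (hP.1 j).le) (Finset.mem_univ _)
  have hterm : ∀ j, 0 ≤ v j ^ 2 / P j.castSucc := fun j => div_nonneg (sq_nonneg _) (hP.1 _).le
  calc v i ^ 2 ≤ v i ^ 2 / P i.castSucc := le_div_self (sq_nonneg _) (hP.1 _) hPi
    _ ≤ ∑ j, v j ^ 2 / P j.castSucc :=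
      Finset.single_le_sum (f := fun j => v j ^ 2 / P j.castSucc) (fun j _ => hterm j)
        (Finset.mem_univ i)
    _ ≤ quadForm (SigmaMat P) v := by
      rw [quadForm_sigmaMat]
      exact le_add_of_nonneg_right (div_nonneg (sq_nonneg _) (hP.1 _).le)

namespace Divergence

variable (D : Divergence m)

lemma contDiffAt (n : ℕ) {s r : Fin m → ℝ} (hs : s ∈ Xi m) (hr : r ∈ Xi m) :
    ContDiffAt ℝ n (fun z : (Fin m → ℝ) × (Fin m → ℝ) => D.f z.1 z.2) (s, r) :=
  (D.smooth.contDiffAt ((isOpen_xi.prod isOpen_xi).mem_nhds ⟨hs, hr⟩)).of_le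
    (WithTop.coe_le_coe.mpr le_top)

lemma quadForm_amat {p : Fin m → ℝ} (hp : p ∈ Xi m) (e : Fin m → ℝ) :
    quadForm (Amat D p) e
      = (1/2) * fderiv ℝ (fderiv ℝ fun z : (Fin m → ℝ) × (Fin m → ℝ) => D.f z.1 z.2) (p, p)
          (e, 0) (e, 0) := by
  set H := fderiv ℝ (fderiv ℝ fun z : (Fin m → ℝ) × (Fin m → ℝ) => D.f z.1 z.2) (p, p)
  have hB := quadForm_eq_of_apply_single (M := Amat D p)
    ((1/2 : ℝ) • H.bilinearComp (ContinuousLinearMap.inl ℝ _ _) (ContinuousLinearMap.inl ℝ _ _))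
    (fun i j => by
      simp [Amat, H, fderiv_fderiv_comp_prodMk_left (D.contDiffAt 2 hp hp)])
  simpa using hB e

theorem isBigO_sub_quadForm_amat {p : Fin m → ℝ} (hp : p ∈ Xi m) :
    (fun v : (Fin m → ℝ) × (Fin m → ℝ) =>
      D.f (p + v.1) (p + v.2) - quadForm (Amat D p) (v.1 - v.2)) =O[𝓝 0] fun v => ‖v‖ ^ 3 := by
  have hF := D.smooth.of_le (m := 2) (WithTop.coe_le_coe.mpr le_top)
  have hnonneg : ∀ s ∈ Xi m, ∀ r ∈ Xi m, 0 ≤ D.f (s, r).1 (s, r).2 := D.nonneg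
  have hdiag : ∀ s ∈ Xi m, D.f (s, s).1 (s, s).2 = 0 := fun s hs =>
    (D.eq_zero_iff s hs s hs).mpr rfl
  refine (D.contDiffAt 3 hp hp).isBigO_taylor_two.congr_left fun v => ?_
  rw [fderiv_diag_eq_zero isOpen_xi hnonneg hdiag hp,
    fderiv_fderiv_apply_self_eq_of_diag isOpen_xi hF hnonneg hdiag hp, D.quadForm_amat hp,
    hdiag p hp]
  simp

end Divergence

lemma memASigma.nonneg {P T R : Fin (m+1) → ℝ} {ρ : ℝ} (hP : ∀ i, 0 < P i)
    (h : memASigma P T R ρ) : 0 ≤ ρ :=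
  (add_nonneg (quadForm_sigmaMat_nonneg hP _) (quadForm_sigmaMat_nonneg hP _)).trans h.2.2

theorem exists_dapp_le_of_memASigma {D : Divergence m} {η : ℝ} (hη : 0 ≤ η)
    (hinv : IsInvariant D η) {P : Fin (m+1) → ℝ} (hP : IsPosDist P) :
    ∃ C ≥ 0, ∃ δ > 0, ∀ T R : Fin (m+1) → ℝ, ∀ ρ < δ, memASigma P T R ρ →
      Dapp D T R ≤ 2 * η * ρ + C * ρ ^ ((3:ℝ)/2) := by
  obtain ⟨C, hC, hO⟩ := (D.isBigO_sub_quadForm_amat (coordOf_mem_xi hP)).exists_nonneg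
  obtain ⟨ε, hε, hball⟩ := Metric.eventually_nhds_iff_ball.mp hO.bound
  refine ⟨C, hC, ε ^ 2, by positivity, fun T R ρ hρ hTR => ?_⟩
  set a := coordOf T - coordOf P with ha
  set b := coordOf R - coordOf P with hb
  clear_value a b
  have hQ : quadForm (SigmaMat P) a + quadForm (SigmaMat P) b ≤ ρ := by
    rw [ha, hb]; exact hTR.2.2
  have ha0 := quadForm_sigmaMat_nonneg hP.1 a
  have hb0 := quadForm_sigmaMat_nonneg hP.1 b
  have hρ0 := hTR.nonneg hP.1
  have hab : ‖(a, b)‖ ≤ √ρ := max_le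
    ((norm_le_sqrt_quadForm_sigmaMat hP a).trans (Real.sqrt_le_sqrt (by linarith)))
    ((norm_le_sqrt_quadForm_sigmaMat hP b).trans (Real.sqrt_le_sqrt (by linarith)))
  have hcube : ‖(a, b)‖ ^ 3 ≤ ρ ^ ((3:ℝ)/2) := by
    calc ‖(a, b)‖ ^ 3 ≤ √ρ ^ 3 := by gcongr
      _ = ρ ^ ((3:ℝ)/2) := by
        rw [Real.sqrt_eq_rpow, ← Real.rpow_natCast, ← Real.rpow_mul hρ0]
        norm_num
  have hDapp : D.f (coordOf P + a) (coordOf P + b) = Dapp D T R := by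
    rw [ha, hb, add_sub_cancel, add_sub_cancel, Dapp]
  have hrem : |Dapp D T R - η * quadForm (SigmaMat P) (a - b)| ≤ C * ‖(a, b)‖ ^ 3 := by
    simpa only [hDapp, hinv P hP, quadForm_smul, Real.norm_eq_abs, abs_pow, abs_norm] using
      hball (a, b) (mem_ball_zero_iff.mpr (hab.trans_lt ((Real.sqrt_lt' hε).mpr hρ)))
  have hsub := quadForm_sub_le (quadForm_sigmaMat_nonneg hP.1) a b
  have hquad : η * quadForm (SigmaMat P) (a - b) ≤ η * (2 * ρ) :=
    mul_le_mul_of_nonneg_left (by linarith) hη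
  linarith [(abs_le.mp hrem).2, mul_le_mul_of_nonneg_left hcube hC]

theorem ball_subset_div_general {m : ℕ}
    (D : Divergence m) (η : ℝ) (hη : 0 < η) (hinv : IsInvariant D η)
    (P₁ P₂ : Fin (m+1) → ℝ) (h₁ : IsPosDist P₁) (h₂ : IsPosDist P₂)
    (rseq : ℕ → ℝ)
    (hΘ : ∃ c₁ > (0:ℝ), ∃ c₂ > (0:ℝ), ∃ N : ℕ, ∀ n ≥ N,
      c₁ / n ≤ rseq n ∧ rseq n ≤ c₂ / n) :
    ∃ M₃ > (0:ℝ), ∃ N₃ : ℕ, ∀ n ≥ N₃, ∀ T R : Fin (m+1) → ℝ,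
      memASigma (Pstar P₁ P₂) T R (rseq n / (2 * η) - M₃ / (n : ℝ) ^ ((3:ℝ)/2)) →
      Dapp D T R < rseq n := by
  obtain ⟨_, _, c₂, hc₂, N, hN⟩ := hΘ
  have hP := isPosDist_pstar h₁ h₂
  obtain ⟨C, hC, δ, hδ, hD⟩ := exists_dapp_le_of_memASigma hη.le hinv hP
  set K := c₂ / (2 * η)
  set M₃ := (C * K ^ ((3:ℝ)/2) + 1) / (2 * η)
  refine ⟨M₃, by positivity, max N (⌈K / δ⌉₊ + 1), fun n hn T R hTR => ?_⟩
  have hKn : K / δ < n := Nat.lt_of_ceil_lt (le_of_max_le_right hn)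
  have hn0 : (0:ℝ) < n := lt_of_le_of_lt (by positivity) hKn
  set ρ := rseq n / (2 * η) - M₃ / (n : ℝ) ^ ((3:ℝ)/2)
  have hρK : ρ ≤ K / n := calc
    ρ ≤ rseq n / (2 * η) := sub_le_self _ (by positivity)
    _ ≤ c₂ / n / (2 * η) := by gcongr; exact (hN n (le_of_max_le_left hn)).2
    _ = K / n := by ring
  have hpow : ρ ^ ((3:ℝ)/2) ≤ K ^ ((3:ℝ)/2) / (n : ℝ) ^ ((3:ℝ)/2) := by
    rw [← Real.div_rpow (by positivity) hn0.le]
    exact Real.rpow_le_rpow (hTR.nonneg hP.1) hρK (by norm_num)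
  calc Dapp D T R ≤ 2 * η * ρ + C * ρ ^ ((3:ℝ)/2) :=
        hD T R ρ (hρK.trans_lt ((div_lt_comm₀ hδ hn0).mp hKn)) hTR
    _ ≤ 2 * η * ρ + C * (K ^ ((3:ℝ)/2) / (n : ℝ) ^ ((3:ℝ)/2)) := by gcongr
    _ = rseq n - 1 / (n : ℝ) ^ ((3:ℝ)/2) := by
        simp only [ρ, M₃]
        field_simp
        ring
    _ < rseq n := sub_lt_self _ (by positivity)

/-- (Lemma on the converse side.) For an invariant divergence `D`
with constant `η > 0`, `P₁ ≠ P₂` with normalized geometric mean `P*`, and thresholds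
`r_n = Θ(1/n)`, eventually `A_{Σ_{𝐏*}}(r_n/(2η) − M₃/n^{3/2}) ⊆ {(T,R) : D(T‖R) < r_n}`. -/
theorem ball_subset_div {m : ℕ} (hm : 1 ≤ m)
    (D : Divergence m) (η : ℝ) (hη : 0 < η) (hinv : IsInvariant D η)
    (P₁ P₂ : Fin (m+1) → ℝ) (h₁ : IsPosDist P₁) (h₂ : IsPosDist P₂) (hne : P₁ ≠ P₂)
    (rseq : ℕ → ℝ) (hrpos : ∀ n, 0 < rseq n)
    (hΘ : ∃ c₁ > (0:ℝ), ∃ c₂ > (0:ℝ), ∃ N : ℕ, ∀ n ≥ N,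
      c₁ / n ≤ rseq n ∧ rseq n ≤ c₂ / n) :
    ∃ M₃ > (0:ℝ), ∃ N₃ : ℕ, ∀ n ≥ N₃, ∀ T R : Fin (m+1) → ℝ,
      memASigma (Pstar P₁ P₂) T R (rseq n / (2 * η) - M₃ / (n : ℝ) ^ ((3:ℝ)/2)) →
      Dapp D T R < rseq n :=
  ball_subset_div_general D η hη hinv P₁ P₂ h₁ h₂ rseq hΘ

end TwoSampleTest
end

section
/- Let P_1 ≠ P_2 ∈ 𝒫(𝒵) and let {r_n} be a sequence of positive reals with r_n → 0. For each n, the minimum over P ∈ 𝒫̄(𝒵) of D_KL(P‖P_1) + D_KL(P‖P_2) − √(r_n)·√(V_KL(P‖P_1) + V_KL(P‖P_2)) is attained, and every sequence {P̃_n} of minimizers converges to P* as n → ∞. -/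
open scoped BigOperators
open Filter MeasureTheory Matrix

namespace TwoSampleTest

variable {m : ℕ}

/-!
Writing `D(P) = D_KL(P‖P₁) + D_KL(P‖P₂)`, the identity `D(P) = 2 D_KL(P‖P*) + 2 D_B(P₁, P₂)`
and Gibbs' inequality make `P*` the unique minimizer of `D` on the simplex. The penalty
`√(V_KL(P‖P₁) + V_KL(P‖P₂))` is continuous, hence bounded on the compact simplex, so a minimizer
`P̃ₙ` of the penalized objective has `D(P̃ₙ) ≤ D(P*) + O(√rₙ)`. On a compact set, a sequence along
which a continuous function tends to its strict minimum value converges to the minimizer.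
-/

theorem _root_.IsCompact.tendsto_nhds_of_tendsto_comp_of_unique_min {X ι : Type*}
    [TopologicalSpace X] {K : Set X} (hK : IsCompact K) {F : X → ℝ} (hF : Continuous F)
    {x₀ : X} (hmin : ∀ x ∈ K, x ≠ x₀ → F x₀ < F x) {l : Filter ι} {f : ι → X}
    (hfK : ∀ᶠ i in l, f i ∈ K) (hFf : Tendsto (F ∘ f) l (nhds (F x₀))) :
    Tendsto f l (nhds x₀) := by
  refine hK.tendsto_nhds_of_unique_mapClusterPt hfK fun x hxK hx => ?_
  by_contra hne
  have hFx : F x = F x₀ :=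
    eq_of_nhds_neBot <| (hx.continuousAt_comp hF.continuousAt).neBot.mono (inf_le_inf_left _ hFf)
  exact (hmin x hxK hne).ne' hFx

theorem _root_.IsCompact.tendsto_nhds_of_isMinOn_sub_mul {X : Type*} [TopologicalSpace X]
    {K : Set X} (hK : IsCompact K) {F G : X → ℝ} (hF : Continuous F) (hG : ContinuousOn G K)
    {x₀ : X} (hx₀ : x₀ ∈ K) (hmin : ∀ x ∈ K, x ≠ x₀ → F x₀ < F x)
    {s : ℕ → ℝ} (hs : Tendsto s atTop (nhds 0)) {x : ℕ → X} (hxK : ∀ n, x n ∈ K)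
    (hx : ∀ n, IsMinOn (fun y => F y - s n * G y) K (x n)) :
    Tendsto x atTop (nhds x₀) := by
  obtain ⟨M, hM⟩ := hK.exists_bound_of_continuousOn hG
  have hlow : ∀ n, F x₀ ≤ F (x n) := fun n => by
    rcases eq_or_ne (x n) x₀ with h | h
    · rw [h]
    · exact (hmin _ (hxK n) h).le
  have hup : ∀ n, F (x n) ≤ F x₀ + |s n| * (2 * M) := fun n => by
    have h := isMinOn_iff.1 (hx n) x₀ hx₀
    have hdiff : s n * (G (x n) - G x₀) ≤ |s n| * (2 * M) := by
      refine (le_abs_self _).trans ?_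
      rw [abs_mul]
      gcongr
      calc |G (x n) - G x₀| ≤ ‖G (x n)‖ + ‖G x₀‖ := abs_sub _ _
        _ ≤ 2 * M := by linarith [hM _ (hxK n), hM _ hx₀]
    linarith
  have hbound : Tendsto (fun n => F x₀ + |s n| * (2 * M)) atTop (nhds (F x₀)) := by
    simpa using tendsto_const_nhds.add ((continuous_abs.tendsto' 0 0 abs_zero).comp hs
      |>.mul_const (2 * M))
  exact hK.tendsto_nhds_of_tendsto_comp_of_unique_min hF hmin (Eventually.of_forall hxK)
    (tendsto_of_tendsto_of_tendsto_of_le_of_le tendsto_const_nhds hbound hlow hup)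

theorem _root_.Real.continuous_mul_log_sq : Continuous fun x : ℝ => x * Real.log x ^ 2 := by
  -- on `[0, ∞)` this is `4 (√x log √x)²`, and it is odd because `log (-x) = log x`
  let k : ℝ → ℝ := fun y => 4 * (Real.sqrt y * Real.log (Real.sqrt y)) ^ 2
  have hk : ∀ y, 0 ≤ y → k y = y * Real.log y ^ 2 := fun y hy => by
    simp only [k, Real.log_sqrt hy, mul_pow, Real.sq_sqrt hy]
    ring
  have hk_neg : ∀ y, y ≤ 0 → k y = 0 := fun y hy => by simp [k, Real.sqrt_eq_zero'.2 hy]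
  have hodd : (fun x : ℝ => x * Real.log x ^ 2) = fun x => k x - k (-x) := by
    funext x
    rcases le_total 0 x with hx | hx
    · rw [hk x hx, hk_neg (-x) (by linarith), sub_zero]
    · rw [hk_neg x hx, hk (-x) (by linarith), Real.log_neg_eq_log]
      ring
  rw [hodd]
  fun_prop

variable {P Q : Fin (m+1) → ℝ}

lemma IsPosDist.isDist (hP : IsPosDist P) : IsDist P := ⟨fun i => (hP.1 i).le, hP.2⟩

lemma continuous_KL (hQ : ∀ i, Q i ≠ 0) : Continuous fun P : Fin (m+1) → ℝ => KL P Q := by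
  have hKL : (fun P : Fin (m+1) → ℝ => KL P Q)
      = fun P => ∑ i, Q i * (P i / Q i * Real.log (P i / Q i)) :=
    funext fun P => Finset.sum_congr rfl fun i _ => by rw [← mul_assoc, mul_div_cancel₀ _ (hQ i)]
  rw [hKL]
  fun_prop

lemma continuous_VKL (hQ : ∀ i, Q i ≠ 0) : Continuous fun P : Fin (m+1) → ℝ => VKL P Q := by
  have hVKL : (fun P : Fin (m+1) → ℝ => VKL P Q) = fun P => ∑ i, Q i *
      (P i / Q i * Real.log (P i / Q i) ^ 2 - 2 * KL P Q * (P i / Q i * Real.log (P i / Q i))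
        + KL P Q ^ 2 * (P i / Q i)) := by
    funext P
    refine Finset.sum_congr rfl fun i _ => ?_
    nth_rewrite 1 [← mul_div_cancel₀ (P i) (hQ i)]
    ring
  have hdiv (i : Fin (m+1)) : Continuous fun P : Fin (m+1) → ℝ => P i / Q i := by fun_prop
  have hK := continuous_KL hQ
  rw [hVKL]
  exact continuous_finsetSum _ fun i _ => continuous_const.mul
    (((Real.continuous_mul_log_sq.comp (hdiv i)).sub ((continuous_const.mul hK).mul
      (Real.continuous_mul_log.comp (hdiv i)))).add ((hK.pow 2).mul (hdiv i)))

lemma KL_eq_sum_klFun (hQ : ∀ i, Q i ≠ 0) :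
    KL P Q = ∑ i, Q i * InformationTheory.klFun (P i / Q i) + ∑ i, P i - ∑ i, Q i := by
  have h (i : Fin (m+1)) : Q i * InformationTheory.klFun (P i / Q i)
      = P i * Real.log (P i / Q i) + Q i - P i := by
    have hQi := hQ i
    rw [InformationTheory.klFun_apply]
    field_simp
  simp only [h, Finset.sum_sub_distrib, Finset.sum_add_distrib, KL]
  ring

lemma KL_nonneg (hP : IsDist P) (hQ : IsPosDist Q) : 0 ≤ KL P Q := by
  rw [KL_eq_sum_klFun fun i => (hQ.1 i).ne', hP.2, hQ.2, add_sub_cancel_right]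
  exact Finset.sum_nonneg fun i _ => mul_nonneg (hQ.1 i).le
    (InformationTheory.klFun_nonneg (div_nonneg (hP.1 i) (hQ.1 i).le))

lemma KL_eq_zero_iff (hP : IsDist P) (hQ : IsPosDist Q) : KL P Q = 0 ↔ P = Q := by
  rw [KL_eq_sum_klFun fun i => (hQ.1 i).ne', hP.2, hQ.2, add_sub_cancel_right,
    Finset.sum_eq_zero_iff_of_nonneg fun i _ => mul_nonneg (hQ.1 i).le
      (InformationTheory.klFun_nonneg (div_nonneg (hP.1 i) (hQ.1 i).le)), funext_iff]
  refine forall_congr' fun i => ?_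
  simp only [Finset.mem_univ, forall_const]
  rw [mul_eq_zero, or_iff_right (hQ.1 i).ne',
    InformationTheory.klFun_eq_zero_iff (div_nonneg (hP.1 i) (hQ.1 i).le),
    div_eq_one_iff_eq (hQ.1 i).ne']

lemma KL_pos (hP : IsDist P) (hQ : IsPosDist Q) (hne : P ≠ Q) : 0 < KL P Q :=
  (KL_nonneg hP hQ).lt_of_ne' fun h => hne ((KL_eq_zero_iff hP hQ).1 h)

lemma isCompact_setOf_isDist : IsCompact {P : Fin (m+1) → ℝ | IsDist P} := by
  have hclosed : IsClosed {P : Fin (m+1) → ℝ | IsDist P} := by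
    rw [show {P : Fin (m+1) → ℝ | IsDist P} = (⋂ i, {P | 0 ≤ P i}) ∩ {P | ∑ i, P i = 1} by
      ext; simp [IsDist]]
    exact (isClosed_iInter fun i => isClosed_le continuous_const (continuous_apply i)).inter
      (isClosed_eq (by fun_prop) continuous_const)
  refine (isCompact_univ_pi fun _ => isCompact_Icc (a := (0 : ℝ)) (b := 1)).of_isClosed_subset
    hclosed fun P hP i _ => ⟨hP.1 i, ?_⟩
  calc P i ≤ ∑ j, P j := Finset.single_le_sum (fun j _ => hP.1 j) (Finset.mem_univ i)
    _ = 1 := hP.2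

section Pstar

variable {P₁ P₂ : Fin (m+1) → ℝ}

lemma sum_sqrt_mul_pos (h₁ : ∀ i, 0 < P₁ i) (h₂ : ∀ i, 0 < P₂ i) :
    0 < ∑ j, Real.sqrt (P₁ j * P₂ j) :=
  Finset.sum_pos (fun j _ => Real.sqrt_pos.2 (mul_pos (h₁ j) (h₂ j))) Finset.univ_nonempty

lemma isPosDist_Pstar (h₁ : ∀ i, 0 < P₁ i) (h₂ : ∀ i, 0 < P₂ i) : IsPosDist (Pstar P₁ P₂) :=
  have hZ := sum_sqrt_mul_pos h₁ h₂
  ⟨fun i => div_pos (Real.sqrt_pos.2 (mul_pos (h₁ i) (h₂ i))) hZ,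
    by simp only [Pstar]; rw [← Finset.sum_div, div_self hZ.ne']⟩

lemma KL_add_KL_eq (h₁ : ∀ i, 0 < P₁ i) (h₂ : ∀ i, 0 < P₂ i) (hP : ∑ i, P i = 1) :
    KL P P₁ + KL P P₂ = 2 * KL P (Pstar P₁ P₂) + 2 * DB P₁ P₂ := by
  have hZ := sum_sqrt_mul_pos h₁ h₂
  have h (i : Fin (m+1)) : P i * Real.log (P i / P₁ i) + P i * Real.log (P i / P₂ i)
      = 2 * (P i * Real.log (P i / Pstar P₁ P₂ i)) + 2 * DB P₁ P₂ * P i := by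
    rcases eq_or_ne (P i) 0 with h0 | hP0
    · simp [h0]
    have hsq := Real.sqrt_pos.2 (mul_pos (h₁ i) (h₂ i))
    rw [Pstar, DB, Real.log_div hP0 (h₁ i).ne', Real.log_div hP0 (h₂ i).ne',
      Real.log_div hP0 (div_pos hsq hZ).ne', Real.log_div hsq.ne' hZ.ne',
      Real.log_sqrt (mul_pos (h₁ i) (h₂ i)).le, Real.log_mul (h₁ i).ne' (h₂ i).ne']
    ring
  rw [KL, KL, ← Finset.sum_add_distrib, Finset.sum_congr rfl fun i _ => h i,
    Finset.sum_add_distrib, ← Finset.mul_sum, ← Finset.mul_sum, hP, KL]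
  ring

lemma KL_add_KL_Pstar_lt (h₁ : IsPosDist P₁) (h₂ : IsPosDist P₂) (hP : IsDist P)
    (hne : P ≠ Pstar P₁ P₂) :
    KL (Pstar P₁ P₂) P₁ + KL (Pstar P₁ P₂) P₂ < KL P P₁ + KL P P₂ := by
  have hPstar := isPosDist_Pstar h₁.1 h₂.1
  rw [KL_add_KL_eq h₁.1 h₂.1 hP.2, KL_add_KL_eq h₁.1 h₂.1 hPstar.2,
    (KL_eq_zero_iff hPstar.isDist hPstar).2 rfl]
  linarith [KL_pos hP hPstar hne]

end Pstar

theorem penalized_minimizers_converge_general {m : ℕ}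
    (P₁ P₂ : Fin (m+1) → ℝ) (h₁ : IsPosDist P₁) (h₂ : IsPosDist P₂)
    (r : ℕ → ℝ) (hr0 : Filter.Tendsto r Filter.atTop (nhds 0)) :
    (∀ n : ℕ, ∃ P : Fin (m+1) → ℝ, IsDist P ∧ ∀ Q : Fin (m+1) → ℝ, IsDist Q →
      KL P P₁ + KL P P₂ - Real.sqrt (r n) * Real.sqrt (VKL P P₁ + VKL P P₂)
        ≤ KL Q P₁ + KL Q P₂ - Real.sqrt (r n) * Real.sqrt (VKL Q P₁ + VKL Q P₂)) ∧
    ∀ Pt : ℕ → Fin (m+1) → ℝ,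
      (∀ n, IsDist (Pt n) ∧ ∀ Q : Fin (m+1) → ℝ, IsDist Q →
        KL (Pt n) P₁ + KL (Pt n) P₂
            - Real.sqrt (r n) * Real.sqrt (VKL (Pt n) P₁ + VKL (Pt n) P₂)
          ≤ KL Q P₁ + KL Q P₂ - Real.sqrt (r n) * Real.sqrt (VKL Q P₁ + VKL Q P₂)) →
      Filter.Tendsto Pt Filter.atTop (nhds (Pstar P₁ P₂)) := by
  have hne₁ i := (h₁.1 i).ne'
  have hne₂ i := (h₂.1 i).ne'
  have hF : Continuous fun P : Fin (m+1) → ℝ => KL P P₁ + KL P P₂ :=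
    (continuous_KL hne₁).add (continuous_KL hne₂)
  have hG : Continuous fun P : Fin (m+1) → ℝ => Real.sqrt (VKL P P₁ + VKL P P₂) :=
    ((continuous_VKL hne₁).add (continuous_VKL hne₂)).sqrt
  have hPstar := isPosDist_Pstar h₁.1 h₂.1
  refine ⟨fun n => ?_, fun Pt hPt => ?_⟩
  · obtain ⟨P, hP, hmin⟩ := isCompact_setOf_isDist.exists_isMinOn
      ⟨P₁, h₁.isDist⟩ (hF.sub (continuous_const.mul hG)).continuousOn
    exact ⟨P, hP, isMinOn_iff.1 hmin⟩
  · exact isCompact_setOf_isDist.tendsto_nhds_of_isMinOn_sub_mul hF hG.continuousOn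
      hPstar.isDist (fun _ => KL_add_KL_Pstar_lt h₁ h₂)
      (by simpa using hr0.sqrt) (fun n => (hPt n).1) fun n => isMinOn_iff.2 (hPt n).2

/-- For `r_n → 0`, the minimum over `P ∈ 𝒫̄(𝒵)` of
`D_KL(P‖P₁) + D_KL(P‖P₂) − √r_n·√(V_KL(P‖P₁)+V_KL(P‖P₂))` is attained, and every
sequence of minimizers converges to `P*`. -/
theorem penalized_minimizers_converge {m : ℕ} (hm : 1 ≤ m)
    (P₁ P₂ : Fin (m+1) → ℝ) (h₁ : IsPosDist P₁) (h₂ : IsPosDist P₂) (hne : P₁ ≠ P₂)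
    (r : ℕ → ℝ) (hrpos : ∀ n, 0 < r n) (hr0 : Filter.Tendsto r Filter.atTop (nhds 0)) :
    (∀ n : ℕ, ∃ P : Fin (m+1) → ℝ, IsDist P ∧ ∀ Q : Fin (m+1) → ℝ, IsDist Q →
      KL P P₁ + KL P P₂ - Real.sqrt (r n) * Real.sqrt (VKL P P₁ + VKL P P₂)
        ≤ KL Q P₁ + KL Q P₂ - Real.sqrt (r n) * Real.sqrt (VKL Q P₁ + VKL Q P₂)) ∧
    ∀ Pt : ℕ → Fin (m+1) → ℝ,
      (∀ n, IsDist (Pt n) ∧ ∀ Q : Fin (m+1) → ℝ, IsDist Q →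
        KL (Pt n) P₁ + KL (Pt n) P₂
            - Real.sqrt (r n) * Real.sqrt (VKL (Pt n) P₁ + VKL (Pt n) P₂)
          ≤ KL Q P₁ + KL Q P₂ - Real.sqrt (r n) * Real.sqrt (VKL Q P₁ + VKL Q P₂)) →
      Filter.Tendsto Pt Filter.atTop (nhds (Pstar P₁ P₂)) :=
  penalized_minimizers_converge_general P₁ P₂ h₁ h₂ r hr0

end TwoSampleTest
end
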